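/- In the planted clique model G(n, 1/2, k) with k ≥ 2·log₂ n, for any fixed subset S of the planted clique K with |S| ≥ 2·log₂ n, the set T of non-clique vertices adjacent to every vertex of S satisfies |T| ≤ 3·log₂ k, except with probability at most (1/n)^(log₂ k). -/

import Mathlib

/-! Union bound. If some `S ⊆ K` with `|S| ≥ 2 log₂ n` has more than
`3 log₂ k` common neighbours outside `K`, then there are `S' ⊆ K` and `T ⊆ Kᶜ` of sizes
`s = ⌈2 log₂ n⌉` and `t = ⌊3 log₂ k⌋ + 1` with all `s t` edges between them present. There are at
most `k^s n^t` such pairs, each occurring with probability `2^(-s t)`, and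
`k^s n^t 2^(-s t) ≤ n^(-log₂ k)` because `(s - log₂ n)(t - log₂ k) ≥ 2 log₂ n log₂ k`. -/

open MeasureTheory

/-- Edge randomness for the planted clique model: each unordered pair of vertices gets an
independent Bernoulli(1/2) bit (edges inside the planted clique are present regardless). -/
noncomputable def edgeMeasure (n : ℕ) : Measure (Sym2 (Fin n) → Bool) :=
  Measure.pi fun _ => (PMF.bernoulli (1 / 2) (by norm_num)).toMeasure

/-- In `G(n,1/2,k)` with planted clique `K`, the set of non-clique vertices adjacent to every
vertex of `S ⊆ K` (for a non-clique vertex, adjacency to a clique vertex is given by the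
random edge bit). -/
def commonNbrs {n : ℕ} (K S : Finset (Fin n)) (ω : Sym2 (Fin n) → Bool) :
    Finset (Fin n) :=
  Finset.univ.filter fun v => v ∉ K ∧ ∀ u ∈ S, ω s(u, v) = true

open Finset
open scoped NNReal ENNReal

instance isProbabilityMeasure_edgeMeasure (n : ℕ) : IsProbabilityMeasure (edgeMeasure n) := by
  unfold edgeMeasure
  infer_instance

lemma measure_pi_bernoulli_forall_eq_true {ι : Type*} [Fintype ι] (p : ℝ≥0) (hp : p ≤ 1)
    (E : Finset ι) :
    Measure.pi (fun _ : ι => (PMF.bernoulli p hp).toMeasure) {ω | ∀ i ∈ E, ω i = true} =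
      (p : ℝ≥0∞) ^ #E := by
  classical
  have hpi : {ω : ι → Bool | ∀ i ∈ E, ω i = true} =
      Set.univ.pi fun i => if i ∈ E then {true} else Set.univ := by
    ext ω
    simp only [Set.mem_ofPred_eq, Set.mem_pi, Set.mem_univ, true_implies]
    refine forall_congr' fun i => ?_
    split_ifs <;> simp [*]
  have hsum : (p : ℝ≥0∞) + (1 - p) = 1 := add_tsub_cancel_of_le (by exact_mod_cast hp)
  rw [hpi, Measure.pi_pi]
  simp [apply_ite, PMF.bernoulli_apply, hsum, prod_ite_mem]

lemma card_image_sym2Mk_of_disjoint {α : Type*} [DecidableEq α] {S T : Finset α}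
    (h : Disjoint S T) : #((S ×ˢ T).image fun p => s(p.1, p.2)) = #S * #T := by
  rw [card_image_of_injOn, card_product]
  rintro ⟨u, v⟩ huv ⟨u', v'⟩ huv' heq
  simp only [coe_product, Set.mem_prod, mem_coe] at huv huv'
  rcases Sym2.eq_iff.mp heq with ⟨rfl, rfl⟩ | ⟨rfl, rfl⟩
  · rfl
  · exact absurd huv.1 (disjoint_left.mp h.symm huv'.2)

lemma edgeMeasure_real_forall_edge_eq_true {n : ℕ} {S T : Finset (Fin n)} (h : Disjoint S T) :
    (edgeMeasure n).real {ω | ∀ u ∈ S, ∀ v ∈ T, ω s(u, v) = true} = (1 / 2) ^ (#S * #T) := by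
  have hevent : {ω : Sym2 (Fin n) → Bool | ∀ u ∈ S, ∀ v ∈ T, ω s(u, v) = true} =
      {ω | ∀ e ∈ (S ×ˢ T).image fun p => s(p.1, p.2), ω e = true} := by
    ext ω
    simp only [Set.mem_ofPred_eq, forall_mem_image, mem_product, and_imp, Prod.forall]
    exact ⟨fun h u v hu hv => h u hu v hv, fun h u hu v hv => h u v hu hv⟩
  rw [measureReal_def, hevent, edgeMeasure, measure_pi_bernoulli_forall_eq_true,
    card_image_sym2Mk_of_disjoint h]
  simp

lemma edgeMeasure_real_exists_le_card_commonNbrs_le {n : ℕ} (K : Finset (Fin n)) (s t : ℕ) :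
    (edgeMeasure n).real {ω | ∃ S ⊆ K, s ≤ #S ∧ t ≤ #(commonNbrs K S ω)} ≤
      (#K : ℝ) ^ s * (n : ℝ) ^ t * (1 / 2) ^ (s * t) := by
  have hcover : {ω | ∃ S ⊆ K, s ≤ #S ∧ t ≤ #(commonNbrs K S ω)} ⊆
      ⋃ S ∈ K.powersetCard s, ⋃ T ∈ Kᶜ.powersetCard t,
        {ω | ∀ u ∈ S, ∀ v ∈ T, ω s(u, v) = true} := by
    rintro ω ⟨S, hSK, hS, hT⟩
    obtain ⟨S', hS'S, rfl⟩ := exists_subset_card_eq hS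
    obtain ⟨T, hTC, rfl⟩ := exists_subset_card_eq hT
    simp only [Set.mem_iUnion, mem_powersetCard, exists_prop]
    refine ⟨S', ⟨hS'S.trans hSK, rfl⟩, T, ⟨fun v hv => ?_, rfl⟩, fun u hu v hv => ?_⟩
    · simpa using (mem_filter.mp (hTC hv)).2.1
    · exact (mem_filter.mp (hTC hv)).2.2 u (hS'S hu)
  have hpair : ∀ S ∈ K.powersetCard s, ∀ T ∈ Kᶜ.powersetCard t,
      (edgeMeasure n).real {ω | ∀ u ∈ S, ∀ v ∈ T, ω s(u, v) = true} = (1 / 2) ^ (s * t) := by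
    intro S hS T hT
    obtain ⟨hSK, rfl⟩ := mem_powersetCard.mp hS
    obtain ⟨hTK, rfl⟩ := mem_powersetCard.mp hT
    exact edgeMeasure_real_forall_edge_eq_true
      (disjoint_of_subset_left hSK (disjoint_of_subset_right hTK disjoint_compl_right))
  have hchoose : ((#(K.powersetCard s) * #(Kᶜ.powersetCard t) : ℕ) : ℝ) ≤ (#K : ℝ) ^ s * n ^ t := by
    rw [card_powersetCard, card_powersetCard]
    have hKc : #Kᶜ ≤ n := (card_le_univ _).trans_eq (Fintype.card_fin n)
    exact_mod_cast Nat.mul_le_mul (Nat.choose_le_pow _ _)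
      ((Nat.choose_le_pow _ _).trans (Nat.pow_le_pow_left hKc t))
  calc _ ≤ (edgeMeasure n).real (⋃ S ∈ K.powersetCard s, ⋃ T ∈ Kᶜ.powersetCard t,
          {ω | ∀ u ∈ S, ∀ v ∈ T, ω s(u, v) = true}) := measureReal_mono hcover (measure_ne_top _ _)
    _ ≤ ∑ S ∈ K.powersetCard s, ∑ T ∈ Kᶜ.powersetCard t,
          (edgeMeasure n).real {ω | ∀ u ∈ S, ∀ v ∈ T, ω s(u, v) = true} :=
        (measureReal_biUnion_finset_le _ _).trans
          (sum_le_sum fun _ _ => measureReal_biUnion_finset_le _ _)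
    _ = ((#(K.powersetCard s) * #(Kᶜ.powersetCard t) : ℕ) : ℝ) * (1 / 2) ^ (s * t) := by
        rw [sum_congr rfl fun S hS => sum_congr rfl (hpair S hS)]
        simp [mul_assoc]
    _ ≤ _ := by gcongr

lemma pow_mul_pow_mul_half_pow_le {a b : ℝ} (ha : 1 ≤ a) (hb : 1 ≤ b) {s t : ℕ}
    (hs : 2 * Real.logb 2 b ≤ s) (ht : 3 * Real.logb 2 a ≤ t) :
    a ^ s * b ^ t * (1 / 2) ^ (s * t) ≤ (1 / b) ^ Real.logb 2 a := by
  have hb0 : 0 < b := by positivity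
  have hlhs : Real.logb 2 (a ^ s * b ^ t * (1 / 2) ^ (s * t)) =
      s * Real.logb 2 a + t * Real.logb 2 b - s * t := by
    rw [Real.logb_mul (by positivity) (by positivity), Real.logb_mul (by positivity) (by positivity),
      Real.logb_pow, Real.logb_pow, Real.logb_pow, one_div, Real.logb_inv,
      Real.logb_self_eq_one one_lt_two]
    push_cast
    ring
  have hrhs : Real.logb 2 ((1 / b) ^ Real.logb 2 a) = -(Real.logb 2 a * Real.logb 2 b) := by
    simp [Real.logb_rpow_eq_mul_logb_of_pos, Real.logb_inv, hb0]
  rw [← Real.logb_le_logb one_lt_two (by positivity) (by positivity), hlhs, hrhs]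
  nlinarith [mul_nonneg (by linarith : (0 : ℝ) ≤ s - 2 * Real.logb 2 b)
      (by linarith : (0 : ℝ) ≤ t - Real.logb 2 a),
    mul_nonneg (Real.logb_nonneg one_lt_two hb) (by linarith : (0 : ℝ) ≤ t - 3 * Real.logb 2 a)]

theorem stmt_5_general (n k : ℕ)
    (K : Finset (Fin n)) (hK : K.card = k) :
    ((edgeMeasure n)
        {ω : Sym2 (Fin n) → Bool | ∃ S ⊆ K,
          2 * Real.logb 2 n ≤ (S.card : ℝ) ∧
          3 * Real.logb 2 k < ((commonNbrs K S ω).card : ℝ)}).toReal ≤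
      ((1 : ℝ) / n) ^ (Real.logb 2 k) := by
  obtain rfl | hk := Nat.eq_zero_or_pos k
  · rw [Nat.cast_zero, Real.logb_zero, Real.rpow_zero]
    exact measureReal_le_one
  have hn : k ≤ n := hK ▸ (card_le_univ K).trans_eq (Fintype.card_fin n)
  have hM : 0 ≤ 3 * Real.logb 2 k := by
    have := Real.logb_nonneg one_lt_two (Nat.one_le_cast.mpr hk); positivity
  set s := ⌈2 * Real.logb 2 n⌉₊
  set t := ⌊3 * Real.logb 2 k⌋₊ + 1
  calc _ ≤ (edgeMeasure n).real {ω | ∃ S ⊆ K, s ≤ #S ∧ t ≤ #(commonNbrs K S ω)} :=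
        measureReal_mono <| by
          rintro ω ⟨S, hSK, hS, hT⟩
          exact ⟨S, hSK, Nat.ceil_le.mpr hS, (Nat.floor_lt hM).mpr hT⟩
    _ ≤ (k : ℝ) ^ s * (n : ℝ) ^ t * (1 / 2) ^ (s * t) :=
        hK ▸ edgeMeasure_real_exists_le_card_commonNbrs_le K s t
    _ ≤ _ := pow_mul_pow_mul_half_pow_le (by exact_mod_cast hk) (by exact_mod_cast hk.trans_le hn)
        (Nat.le_ceil _) (by push_cast [t]; exact (Nat.lt_floor_add_one _).le)

/-- in the planted clique model with clique `K` of size `k ≥ 2 log₂ n`,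
except with probability at most `(1/n)^(log₂ k)`, simultaneously every subset `S ⊆ K` with
`|S| ≥ 2 log₂ n` has at most `3 log₂ k` non-clique vertices adjacent to all of `S`. -/
theorem stmt_5 (n k : ℕ) (hn : 0 < n) (hk : 2 * Real.logb 2 n ≤ (k : ℝ))
    (K : Finset (Fin n)) (hK : K.card = k) :
    ((edgeMeasure n)
        {ω : Sym2 (Fin n) → Bool | ∃ S ⊆ K,
          2 * Real.logb 2 n ≤ (S.card : ℝ) ∧
          3 * Real.logb 2 k < ((commonNbrs K S ω).card : ℝ)}).toReal ≤
      ((1 : ℝ) / n) ^ (Real.logb 2 k) :=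
  stmt_5_general n k K hK
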